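/- Fix integers n ≥ 0 and m ≥ 0, and define for y ∈ ℝ the quantizer Q_i(y) = 2^{−n} · round(2^n y) (nearest point of the lattice Λ_i = 2^{−n}ℤ, with a fixed tie-breaking rule) and the reduction y mod Λ_o = y − 2^m · round(2^{−m} y) (nearest-point reduction modulo the lattice Λ_o = 2^m ℤ). For σ² > 1/2 let (x_1, x_2) be zero-mean jointly Gaussian with E[x_1²] = E[x_2²] = σ² and E[x_1 x_2] = (1 − 1/(2σ²))σ², so that x_1 − x_2 is a standard Gaussian. Set x̃_j = Q_i(x_j), u_j = x̃_j mod Λ_o for j = 1, 2, and x̂_3 = (u_1 − u_2) mod Λ_o. Then for every d > 0 there exist m and n (not depending on σ²) such that E[(x_1 − x_2 − x̂_3)²] ≤ d for all σ² > 1/2. -/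

import Mathlib

open MeasureTheory ProbabilityTheory

/-- A finite family of real random variables is *jointly Gaussian* if every linear
combination of them has a (possibly degenerate) Gaussian distribution. -/
def IsJointlyGaussian {Ω ι : Type*} [MeasurableSpace Ω] [Fintype ι]
    (μ : Measure Ω) (X : ι → Ω → ℝ) : Prop :=
  ∀ c : ι → ℝ, ∃ (m : ℝ) (v : NNReal),
    Measure.map (fun ω => ∑ i, c i * X i ω) μ = gaussianReal m v

/-- The quantizer onto the fine lattice `Λ_i = 2^(−n) ℤ`:
`Q_i(y) = 2^(−n) ⬝ round(2^n y)` (nearest point, rounding half up). -/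
noncomputable def Qi (n : ℕ) (y : ℝ) : ℝ :=
  (2 : ℝ) ^ (-(n : ℤ)) * (round ((2 : ℝ) ^ (n : ℕ) * y) : ℤ)

/-- Reduction modulo the coarse lattice `Λ_o = 2^m ℤ`:
`y mod Λ_o = y − 2^m ⬝ round(2^(−m) y)`. -/
noncomputable def modLat (m : ℕ) (y : ℝ) : ℝ :=
  y - (2 : ℝ) ^ (m : ℕ) * (round ((2 : ℝ) ^ (-(m : ℤ)) * y) : ℤ)

open Filter Topology
open scoped NNReal

/-!
Write `z = x₁ - x₂`, a standard Gaussian whatever `σ²` is. Quantizing each `x_j` to `2^(-n) ℤ`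
moves the difference by at most `2^(-n)`, and reduction modulo `2^m ℤ` is compatible with
differences, so `x̂₃ = (Q_i(x₁) - Q_i(x₂)) mod Λ_o`. If `|Q_i(x₁) - Q_i(x₂)| < 2^m / 2` the
reduction does nothing and the squared error is at most `4^(-n)`; otherwise `|z| ≥ 2^m / 2 - 1`
and the error is at most `(2|z| + 1)² ≤ 8z² + 2`. The distortion is therefore bounded by
`4^(-n) + E[(8z² + 2) 1{|z| ≥ 2^m / 2 - 1}]`, which depends only on the law `N(0, 1)` of `z` and
tends to `0` as `m → ∞` by dominated convergence.
-/

lemma two_zpow_neg_mul_two_pow (k : ℕ) : (2 : ℝ) ^ (-(k : ℤ)) * 2 ^ k = 1 := by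
  rw [← zpow_natCast, zpow_neg_mul_zpow_self _ two_ne_zero]

lemma sub_Qi_eq (n : ℕ) (y : ℝ) :
    y - Qi n y = 2 ^ (-(n : ℤ)) * (2 ^ n * y - round (2 ^ n * y)) := by
  rw [Qi, mul_sub, ← mul_assoc, two_zpow_neg_mul_two_pow, one_mul]

lemma abs_sub_Qi_le (n : ℕ) (y : ℝ) : |y - Qi n y| ≤ 2 ^ (-(n : ℤ)) / 2 := by
  rw [sub_Qi_eq, abs_mul, abs_of_pos (by positivity)]
  exact (mul_le_mul_of_nonneg_left (abs_sub_round _) (by positivity)).trans_eq (by ring)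

lemma modLat_eq (m : ℕ) (y : ℝ) :
    modLat m y = 2 ^ m * (2 ^ (-(m : ℤ)) * y - round (2 ^ (-(m : ℤ)) * y)) := by
  rw [modLat, mul_sub, ← mul_assoc, mul_comm (2 ^ m : ℝ) (2 ^ (-(m : ℤ))),
    two_zpow_neg_mul_two_pow, one_mul]

lemma abs_modLat_le (m : ℕ) (y : ℝ) : |modLat m y| ≤ 2 ^ m / 2 := by
  rw [modLat_eq, abs_mul, abs_of_pos (by positivity)]
  exact (mul_le_mul_of_nonneg_left (abs_sub_round _) (by positivity)).trans_eq (by ring)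

lemma modLat_of_abs_lt {m : ℕ} {y : ℝ} (h : |y| < 2 ^ m / 2) : modLat m y = y := by
  have hy : |(2 : ℝ) ^ (-(m : ℤ)) * y| < 1 / 2 := by
    rw [abs_mul, abs_of_pos (by positivity)]
    calc (2 : ℝ) ^ (-(m : ℤ)) * |y| < 2 ^ (-(m : ℤ)) * (2 ^ m / 2) := by gcongr
      _ = 1 / 2 := by rw [mul_div_assoc', two_zpow_neg_mul_two_pow]
  have hr : round ((2 : ℝ) ^ (-(m : ℤ)) * y) = 0 :=
    round_eq_zero_iff.2 ⟨(abs_lt.1 hy).1.le, (abs_lt.1 hy).2⟩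
  rw [modLat, hr, Int.cast_zero, mul_zero, sub_zero]

lemma modLat_sub_two_pow_mul (m : ℕ) (y : ℝ) (k : ℤ) : modLat m (y - 2 ^ m * k) = modLat m y := by
  have : (2 : ℝ) ^ (-(m : ℤ)) * (y - 2 ^ m * k) = 2 ^ (-(m : ℤ)) * y - k := by
    rw [mul_sub, ← mul_assoc, two_zpow_neg_mul_two_pow, one_mul]
  rw [modLat, modLat, this, round_sub_intCast]
  push_cast
  ring

lemma modLat_sub_modLat (m : ℕ) (a b : ℝ) :
    modLat m (modLat m a - modLat m b) = modLat m (a - b) := by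
  convert modLat_sub_two_pow_mul m (a - b)
    (round ((2 : ℝ) ^ (-(m : ℤ)) * a) - round ((2 : ℝ) ^ (-(m : ℤ)) * b)) using 2
  rw [modLat, modLat]
  push_cast
  ring

noncomputable def overloadBound (R : ℝ) : ℝ → ℝ :=
  {z | R ≤ |z|}.indicator fun z => 8 * z ^ 2 + 2

lemma overloadBound_nonneg (R z : ℝ) : 0 ≤ overloadBound R z :=
  Set.indicator_nonneg (fun _ _ => by positivity) z

lemma sq_sub_modLat_le (m : ℕ) {z w δ : ℝ} (hzw : |z - w| ≤ δ) (hδ : δ ≤ 1) :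
    (z - modLat m w) ^ 2 ≤ δ ^ 2 + overloadBound (2 ^ m / 2 - 1) z := by
  rcases lt_or_ge |w| (2 ^ m / 2) with hw | hw
  · rw [modLat_of_abs_lt hw]
    linarith [sq_le_sq' (abs_le.1 hzw).1 (abs_le.1 hzw).2, overloadBound_nonneg (2 ^ m / 2 - 1) z]
  · have hz : 2 ^ m / 2 - 1 ≤ |z| := by
      linarith [abs_sub_abs_le_abs_sub w z, abs_sub_comm w z]
    have hmod : |z - modLat m w| ≤ 2 * |z| + 1 := by
      linarith [abs_sub z (modLat m w), abs_modLat_le m w]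
    rw [overloadBound, Set.indicator_of_mem (show z ∈ {z : ℝ | 2 ^ m / 2 - 1 ≤ |z|} from hz)]
    calc (z - modLat m w) ^ 2 ≤ (2 * |z| + 1) ^ 2 := by
          rw [← sq_abs]; gcongr
      _ ≤ δ ^ 2 + (8 * z ^ 2 + 2) := by nlinarith [sq_abs z, sq_nonneg (2 * |z| - 1), sq_nonneg δ]

lemma sq_sub_lattice_scheme_le (n m : ℕ) (y₁ y₂ : ℝ) :
    (y₁ - y₂ - modLat m (modLat m (Qi n y₁) - modLat m (Qi n y₂))) ^ 2 ≤
      ((2 : ℝ) ^ (-(n : ℤ))) ^ 2 + overloadBound (2 ^ m / 2 - 1) (y₁ - y₂) := by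
  rw [modLat_sub_modLat]
  refine sq_sub_modLat_le m ?_ (zpow_le_one_of_nonpos₀ one_le_two (by simp))
  calc |y₁ - y₂ - (Qi n y₁ - Qi n y₂)| = |(y₁ - Qi n y₁) - (y₂ - Qi n y₂)| := by ring_nf
    _ ≤ |y₁ - Qi n y₁| + |y₂ - Qi n y₂| := abs_sub _ _
    _ ≤ 2 ^ (-(n : ℤ)) := by linarith [abs_sub_Qi_le n y₁, abs_sub_Qi_le n y₂]

lemma measurable_overloadBound (R : ℝ) : Measurable (overloadBound R) :=
  (by fun_prop : Measurable fun z : ℝ => 8 * z ^ 2 + 2).indicator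
    (measurableSet_le measurable_const measurable_abs)

section Tail

variable {ν : Measure ℝ} [IsFiniteMeasure ν]

lemma integrable_overloadBound (h : Integrable (fun z => z ^ 2) ν) (R : ℝ) :
    Integrable (overloadBound R) ν :=
  ((h.const_mul 8).add (integrable_const 2)).indicator
    (measurableSet_le measurable_const measurable_abs)

lemma tendsto_integral_overloadBound (h : Integrable (fun z => z ^ 2) ν) :
    Tendsto (fun R => ∫ z, overloadBound R z ∂ν) atTop (𝓝 0) := by
  have hdom := tendsto_integral_filter_of_dominated_convergence (l := atTop)
    (f := fun _ => (0 : ℝ)) (fun z => 8 * z ^ 2 + 2)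
    (Eventually.of_forall fun R => (measurable_overloadBound R).aestronglyMeasurable)
    (Eventually.of_forall fun R => ae_of_all _ fun z => ?_)
    ((h.const_mul 8).add (integrable_const 2))
    (ae_of_all _ fun z => tendsto_const_nhds.congr' ?_)
  · simpa using hdom
  · rw [Real.norm_eq_abs, abs_of_nonneg (overloadBound_nonneg R z)]
    exact Set.indicator_le_self' (fun _ _ => by positivity) z
  · filter_upwards [eventually_gt_atTop |z|] with R hR
    exact (Set.indicator_of_notMem (show z ∉ {z : ℝ | R ≤ |z|} from not_le.2 hR) _).symm

end Tail

section Moments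

variable {Ω : Type*} [MeasurableSpace Ω] {μ : Measure Ω}

lemma integral_sq_lattice_scheme_le [IsProbabilityMeasure μ] {x₁ x₂ : Ω → ℝ}
    (hZ : AEMeasurable (fun ω => x₁ ω - x₂ ω) μ) {ν : Measure ℝ}
    (hlaw : μ.map (fun ω => x₁ ω - x₂ ω) = ν) (hν : Integrable (fun z => z ^ 2) ν) (n m : ℕ) :
    ∫ ω, (x₁ ω - x₂ ω - modLat m (modLat m (Qi n (x₁ ω)) - modLat m (Qi n (x₂ ω)))) ^ 2 ∂μ ≤
      ((2 : ℝ) ^ (-(n : ℤ))) ^ 2 + ∫ z, overloadBound (2 ^ m / 2 - 1) z ∂ν := by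
  subst hlaw
  have hB := measurable_overloadBound (2 ^ m / 2 - 1)
  have hint : Integrable (fun ω => overloadBound (2 ^ m / 2 - 1) (x₁ ω - x₂ ω)) μ :=
    (integrable_map_measure hB.aestronglyMeasurable hZ).1 (integrable_overloadBound hν _)
  calc _ ≤ ∫ ω, (((2 : ℝ) ^ (-(n : ℤ))) ^ 2 + overloadBound (2 ^ m / 2 - 1) (x₁ ω - x₂ ω)) ∂μ :=
        integral_mono_of_nonneg (ae_of_all _ fun _ => sq_nonneg _) ((integrable_const _).add hint)
          (ae_of_all _ fun ω => sq_sub_lattice_scheme_le n m (x₁ ω) (x₂ ω))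
    _ = _ := by
        rw [integral_add (integrable_const _) hint, integral_const, probReal_univ, one_smul,
          integral_map hZ hB.aestronglyMeasurable]

lemma memLp_of_map_eq_gaussianReal {X : Ω → ℝ} (hX : AEMeasurable X μ) {m : ℝ} {v : ℝ≥0}
    (h : μ.map X = gaussianReal m v) (p : ℝ≥0) : MemLp X p μ := by
  have hid := memLp_id_gaussianReal (μ := m) (v := v) p
  rwa [← h, memLp_map_measure_iff aestronglyMeasurable_id hX] at hid

lemma map_eq_gaussianReal_zero_one {Z : Ω → ℝ} (hZ : AEMeasurable Z μ) {m : ℝ} {v : ℝ≥0}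
    (h : μ.map Z = gaussianReal m v) (h₁ : ∫ ω, Z ω ∂μ = 0) (h₂ : ∫ ω, Z ω ^ 2 ∂μ = 1) :
    μ.map Z = gaussianReal 0 1 := by
  have hm : m = 0 := by
    rw [← h₁, ← integral_id_gaussianReal (μ := m) (v := v), ← h]
    exact integral_map hZ aestronglyMeasurable_id
  have hv : (v : ℝ) = 1 := by
    rw [← variance_id_gaussianReal (μ := m), ← h, variance_map aemeasurable_id hZ,
      Function.id_comp, variance_of_integral_eq_zero hZ h₁, h₂]
  rw [h, hm, NNReal.coe_eq_one.1 hv]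

lemma integral_sub_sq {X Y : Ω → ℝ} [IsFiniteMeasure μ] (hX : MemLp X 2 μ) (hY : MemLp Y 2 μ) :
    ∫ ω, (X ω - Y ω) ^ 2 ∂μ =
      ∫ ω, X ω ^ 2 ∂μ - 2 * ∫ ω, X ω * Y ω ∂μ + ∫ ω, Y ω ^ 2 ∂μ := by
  have hXY : Integrable (fun ω => 2 * (X ω * Y ω)) μ := (hX.integrable_mul hY).const_mul 2
  have hXXY : Integrable (fun ω => X ω ^ 2 - 2 * (X ω * Y ω)) μ := hX.integrable_sq.sub hXY
  simp_rw [sub_sq, mul_assoc]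
  rw [integral_add hXXY hY.integrable_sq,
    integral_sub hX.integrable_sq hXY, integral_const_mul]

lemma IsJointlyGaussian.memLp {ι : Type*} [Fintype ι] {X : ι → Ω → ℝ}
    (h : IsJointlyGaussian μ X) (hX : ∀ i, Measurable (X i)) (i : ι) (p : ℝ≥0) :
    MemLp (X i) p μ := by
  classical
  obtain ⟨m, v, hmv⟩ := h (Pi.single i 1)
  simp only [Pi.single_apply, ite_mul, one_mul, zero_mul, Finset.sum_ite_eq', Finset.mem_univ,
    if_true] at hmv
  exact memLp_of_map_eq_gaussianReal (hX i).aemeasurable hmv p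

lemma IsJointlyGaussian.map_sub_eq_gaussianReal_zero_one [IsFiniteMeasure μ] {X Y : Ω → ℝ}
    (h : IsJointlyGaussian μ ![X, Y]) (hX : Measurable X) (hY : Measurable Y)
    (hX₀ : ∫ ω, X ω ∂μ = 0) (hY₀ : ∫ ω, Y ω ∂μ = 0)
    (h₂ : ∫ ω, X ω ^ 2 ∂μ - 2 * ∫ ω, X ω * Y ω ∂μ + ∫ ω, Y ω ^ 2 ∂μ = 1) :
    μ.map (fun ω => X ω - Y ω) = gaussianReal 0 1 := by
  have hmeas : ∀ i, Measurable (![X, Y] i) := fun i => by fin_cases i <;> assumption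
  have hX₂ : MemLp X 2 μ := h.memLp hmeas 0 2
  have hY₂ : MemLp Y 2 μ := h.memLp hmeas 1 2
  obtain ⟨m, v, hmv⟩ := h ![1, -1]
  simp only [Fin.sum_univ_two, Matrix.cons_val_zero, Matrix.cons_val_one, one_mul, neg_one_mul,
    ← sub_eq_add_neg] at hmv
  refine map_eq_gaussianReal_zero_one (hX.sub hY).aemeasurable hmv ?_
    (by rw [integral_sub_sq hX₂ hY₂, h₂])
  rw [integral_sub (hX₂.integrable one_le_two) (hY₂.integrable one_le_two), hX₀, hY₀, sub_zero]

end Moments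

/-- For every `d > 0` there exist `m` and `n` (not depending on `σ²`)
such that for every zero-mean jointly Gaussian pair `(x₁, x₂)` with
`E[x₁²] = E[x₂²] = σ² > 1/2` and `E[x₁ x₂] = (1 − 1/(2σ²))σ²` (so `x₁ − x₂` is standard
Gaussian), the lattice scheme `x̂₃ = (u₁ − u₂) mod Λ_o`, with `u_j = Q_i(x_j) mod Λ_o`,
satisfies `E[(x₁ − x₂ − x̂₃)²] ≤ d`. -/
theorem lattice_scheme_distortion (d : ℝ) (hd : 0 < d) :
    ∃ n m : ℕ,
      ∀ (Ω : Type) (_ : MeasurableSpace Ω) (μ : Measure Ω) (_ : IsProbabilityMeasure μ)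
        (s : ℝ), 1 / 2 < s →
        ∀ x₁ x₂ : Ω → ℝ, Measurable x₁ → Measurable x₂ →
          IsJointlyGaussian μ ![x₁, x₂] →
          (∫ ω, x₁ ω ∂μ) = 0 → (∫ ω, x₂ ω ∂μ) = 0 →
          (∫ ω, (x₁ ω) ^ 2 ∂μ) = s → (∫ ω, (x₂ ω) ^ 2 ∂μ) = s →
          (∫ ω, x₁ ω * x₂ ω ∂μ) = (1 - 1 / (2 * s)) * s →
          ∫ ω, (x₁ ω - x₂ ω -
              modLat m (modLat m (Qi n (x₁ ω)) - modLat m (Qi n (x₂ ω)))) ^ 2 ∂μ ≤ d := by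
  have hsq : Integrable (fun z => z ^ 2) (gaussianReal 0 1) :=
    (memLp_id_gaussianReal' 2 (by simp)).integrable_sq
  obtain ⟨n, hn⟩ : ∃ n : ℕ, ((2 : ℝ) ^ (-(n : ℤ))) ^ 2 < d / 2 := by
    obtain ⟨n, hn⟩ := exists_pow_lt_of_lt_one (half_pos hd) (by norm_num : (1 / 4 : ℝ) < 1)
    refine ⟨n, lt_of_eq_of_lt ?_ hn⟩
    rw [zpow_neg, zpow_natCast, ← inv_pow, ← pow_mul, mul_comm, pow_mul]
    norm_num
  have hR : Tendsto (fun m : ℕ => (2 : ℝ) ^ m / 2 - 1) atTop atTop :=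
    tendsto_atTop_add_const_right _ _
      ((tendsto_pow_atTop_atTop_of_one_lt one_lt_two).atTop_div_const two_pos)
  obtain ⟨m, hm⟩ : ∃ m : ℕ, ∫ z, overloadBound (2 ^ m / 2 - 1) z ∂gaussianReal 0 1 < d / 2 :=
    (((tendsto_integral_overloadBound hsq).comp hR).eventually (gt_mem_nhds (half_pos hd))).exists
  refine ⟨n, m, fun Ω _ μ _ s hs x₁ x₂ hx₁ hx₂ hG hx₁₀ hx₂₀ hs₁ hs₂ hc => ?_⟩
  have hlaw : μ.map (fun ω => x₁ ω - x₂ ω) = gaussianReal 0 1 :=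
    hG.map_sub_eq_gaussianReal_zero_one hx₁ hx₂ hx₁₀ hx₂₀ (by
      have hs₀ : s ≠ 0 := (one_half_pos.trans hs).ne'
      rw [hs₁, hs₂, hc]; field_simp; ring)
  linarith [integral_sq_lattice_scheme_le (hx₁.sub hx₂).aemeasurable hlaw hsq n m]
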